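/- arXiv:2211.02706 — 2 statements merged into one kernel-verified Lean document; each statement's English description precedes it below -/
import Mathlib

section
/- Let (P_n) be a t-periodic sub-Markovian semigroup with cyclic classes A_0,...,A_{t-1} and Q_n := P_{nt} on A_0, and let ν be a QSD for Q with absorption rate θ. If μ is any QSD for P such that μ(· ∩ A_0)/μ(A_0) = ν, then μ = (Σ_{i=0}^{t-1} θ^{-i/t} ν P_i)/(Σ_{i=0}^{t-1} θ^{-i/t} ν P_i 1_E); i.e., the QSD of P extending ν is unique. -/
open MeasureTheory ProbabilityTheory

noncomputable def iterK {E : Type*} [MeasurableSpace E] (κ : Kernel E E) :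
    ℕ → Kernel E E
  | 0 => Kernel.id
  | n + 1 => Kernel.comp κ (iterK κ n)

/-!
Periodicity says that `κ` moves mass from `A i` only into `A (i + 1)`, so restricting the
QSD equation `μκ = ρμ` to `A (i + 1)` gives `ρ • μ|A (i + 1) = (μ|A i)κ`. Iterating,
`ρⁿ • μ|A n = (μ|A 0)κⁿ`; at `n = t` this is a QSD equation for `μ|A 0 ∝ ν` under `κᵗ`, which
forces `ρᵗ = θ`. Hence `μ|A i = θ^(-i/t) μ(A 0) • νκⁱ`; summing over the cyclic classes
exhibits `μ` as a multiple of `∑ θ^(-i/t) • νκⁱ`, and `μ(E) = 1` fixes the multiple.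
-/

open scoped ENNReal

namespace MeasureTheory.Measure

variable {E : Type*} [MeasurableSpace E]

lemma measure_ne_zero_of_inv_smul_restrict_eq {μ ν : Measure E} [NeZero ν] {s : Set E}
    (h : (μ s)⁻¹ • μ.restrict s = ν) : μ s ≠ 0 := by
  intro hs
  rw [Measure.restrict_eq_zero.mpr hs, smul_zero] at h
  exact NeZero.ne ν h.symm

lemma restrict_eq_measure_smul_of_inv_smul_restrict_eq {μ ν : Measure E} [IsFiniteMeasure μ]
    [NeZero ν] {s : Set E} (h : (μ s)⁻¹ • μ.restrict s = ν) : μ.restrict s = μ s • ν := by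
  rw [← h, smul_smul, ENNReal.mul_inv_cancel (measure_ne_zero_of_inv_smul_restrict_eq h)
    (measure_ne_top μ s), one_smul]

lemma eq_sum_restrict_of_partition {ι : Type*} [Fintype ι] (μ : Measure E) {A : ι → Set E}
    (hAmeas : ∀ i, MeasurableSet (A i)) (hAdisj : Pairwise (Function.onFun Disjoint A))
    (hAcover : ⋃ i, A i = Set.univ) : μ = ∑ i, μ.restrict (A i) := by
  rw [← sum_fintype, ← restrict_iUnion hAdisj hAmeas, hAcover, restrict_univ]

lemma eq_inv_measure_univ_smul_of_eq_smul {μ M : Measure E} [IsProbabilityMeasure μ]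
    {c : ℝ≥0∞} (h : μ = c • M) : μ = (M Set.univ)⁻¹ • M := by
  have hc : c * M Set.univ = 1 := by
    rw [← smul_eq_mul, ← Measure.smul_apply, ← h, measure_univ]
  rwa [← ENNReal.eq_inv_of_mul_eq_one_left hc]

end MeasureTheory.Measure

lemma ENNReal.ofReal_pow_rpow_neg_div {ρ : ℝ} (hρ : 0 < ρ) {t : ℕ} (ht : t ≠ 0) (i : ℕ) :
    ENNReal.ofReal ((ρ ^ t) ^ (-(i : ℝ) / t)) = (ENNReal.ofReal ρ ^ i)⁻¹ := by
  have hexp : (t : ℝ) * (-(i : ℝ) / t) = -i := by field_simp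
  rw [← Real.rpow_natCast ρ t, ← Real.rpow_mul hρ.le, hexp, Real.rpow_neg hρ.le,
    Real.rpow_natCast, ENNReal.ofReal_inv_of_pos (pow_pos hρ i), ENNReal.ofReal_pow hρ.le]

section Periodic

variable {E : Type*} [MeasurableSpace E] (κ : Kernel E E) {t : ℕ} [NeZero t] {A : Fin t → Set E}

lemma bind_iterK_zero (m : Measure E) : m.bind (iterK κ 0) = m := by
  simp [iterK]

lemma bind_iterK_succ (m : Measure E) (n : ℕ) :
    m.bind (iterK κ (n + 1)) = (m.bind (iterK κ n)).bind κ := by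
  rw [Measure.bind_bind (iterK κ n).measurable.aemeasurable κ.measurable.aemeasurable]
  rfl

lemma kernel_compl_next_eq_zero (hAcover : ⋃ i, A i = Set.univ)
    (hnext : ∀ i, ∀ x ∈ A i, ∀ j, j ≠ i + 1 → κ x (A j) = 0) {i : Fin t} {x : E}
    (hx : x ∈ A i) : κ x (A (i + 1))ᶜ = 0 := by
  have hcompl : (A (i + 1))ᶜ ⊆ ⋃ j, ⋃ (_ : j ≠ i + 1), A j := by
    intro y hy
    obtain ⟨j, hj⟩ := Set.mem_iUnion.mp (hAcover ▸ Set.mem_univ y)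
    exact Set.mem_iUnion₂.mpr ⟨j, fun h => hy (h ▸ hj), hj⟩
  refine measure_mono_null hcompl ?_
  simpa [measure_iUnion_null_iff] using hnext i x hx

lemma kernel_inter_next_eq_indicator (hAcover : ⋃ i, A i = Set.univ)
    (hnext : ∀ i, ∀ x ∈ A i, ∀ j, j ≠ i + 1 → κ x (A j) = 0) (i : Fin t) (S : Set E) (x : E) :
    κ x (S ∩ A (i + 1)) = (A i).indicator (fun y => κ y S) x := by
  by_cases hx : x ∈ A i
  · rw [Set.indicator_of_mem hx,
      measure_inter_conull (kernel_compl_next_eq_zero κ hAcover hnext hx)]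
  · obtain ⟨j, hj⟩ := Set.mem_iUnion.mp (hAcover ▸ Set.mem_univ x)
    have hji : j ≠ i := fun h => hx (h ▸ hj)
    rw [Set.indicator_of_notMem hx]
    exact measure_mono_null Set.inter_subset_right
      (hnext j x hj (i + 1) fun h => hji (add_right_cancel h).symm)

lemma restrict_next_bind_eq_bind_restrict (hAmeas : ∀ i, MeasurableSet (A i))
    (hAcover : ⋃ i, A i = Set.univ) (hnext : ∀ i, ∀ x ∈ A i, ∀ j, j ≠ i + 1 → κ x (A j) = 0)
    (m : Measure E) (i : Fin t) :
    (m.bind κ).restrict (A (i + 1)) = (m.restrict (A i)).bind κ := by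
  ext S hS
  rw [Measure.restrict_apply hS, Measure.bind_apply (hS.inter (hAmeas _)) κ.aemeasurable,
    Measure.bind_apply hS κ.aemeasurable, ← lintegral_indicator (hAmeas i)]
  exact lintegral_congr (kernel_inter_next_eq_indicator κ hAcover hnext i S)

-- `A n` for `n : ℕ` is the class of index `n mod t`.
open Fin.NatCast in
lemma pow_smul_restrict_eq_bind_iterK (hAmeas : ∀ i, MeasurableSet (A i))
    (hAcover : ⋃ i, A i = Set.univ) (hnext : ∀ i, ∀ x ∈ A i, ∀ j, j ≠ i + 1 → κ x (A j) = 0)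
    {m : Measure E} {r : ℝ≥0∞} (hm : m.bind κ = r • m) (n : ℕ) :
    r ^ n • m.restrict (A n) = (m.restrict (A 0)).bind (iterK κ n) := by
  induction n with
  | zero => simp [bind_iterK_zero]
  | succ n ih =>
    calc r ^ (n + 1) • m.restrict (A (n + 1 : ℕ))
        = r ^ n • (m.bind κ).restrict (A (n + 1)) := by
          rw [hm, Measure.restrict_smul, smul_smul, ← pow_succ, Nat.cast_succ]
      _ = (r ^ n • m.restrict (A n)).bind κ := by
          rw [restrict_next_bind_eq_bind_restrict κ hAmeas hAcover hnext, Measure.bind_smul]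
      _ = (m.restrict (A 0)).bind (iterK κ (n + 1)) := by
          rw [ih, bind_iterK_succ]

open Fin.NatCast in
lemma pow_period_eq_of_bind_iterK_period (hAmeas : ∀ i, MeasurableSet (A i))
    (hAcover : ⋃ i, A i = Set.univ) (hnext : ∀ i, ∀ x ∈ A i, ∀ j, j ≠ i + 1 → κ x (A j) = 0)
    {m : Measure E} [IsFiniteMeasure m] {r q : ℝ≥0∞} (hm : m.bind κ = r • m) (h0 : m (A 0) ≠ 0)
    (hq : (m.restrict (A 0)).bind (iterK κ t) = q • m.restrict (A 0)) : r ^ t = q := by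
  have h := congrArg (· Set.univ) (pow_smul_restrict_eq_bind_iterK κ hAmeas hAcover hnext hm t)
  simp only [Fin.natCast_self, hq, Measure.smul_apply, Measure.restrict_apply_univ,
    smul_eq_mul] at h
  exact (ENNReal.mul_left_inj h0 (measure_ne_top m _)).mp h

open Fin.NatCast in
lemma restrict_eq_inv_pow_smul_bind_iterK (hAmeas : ∀ i, MeasurableSet (A i))
    (hAcover : ⋃ i, A i = Set.univ) (hnext : ∀ i, ∀ x ∈ A i, ∀ j, j ≠ i + 1 → κ x (A j) = 0)
    {m : Measure E} {r : ℝ≥0∞} (hm : m.bind κ = r • m) (hr0 : r ≠ 0) (hrtop : r ≠ ⊤)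
    (i : Fin t) : m.restrict (A i) = (r ^ (i : ℕ))⁻¹ • (m.restrict (A 0)).bind (iterK κ i) := by
  rw [← pow_smul_restrict_eq_bind_iterK κ hAmeas hAcover hnext hm, Fin.cast_val_eq_self,
    smul_smul, ENNReal.inv_mul_cancel (pow_ne_zero _ hr0) (ENNReal.pow_ne_top hrtop), one_smul]

lemma eq_sum_inv_pow_smul_bind_iterK (hAmeas : ∀ i, MeasurableSet (A i))
    (hAdisj : Pairwise (Function.onFun Disjoint A)) (hAcover : ⋃ i, A i = Set.univ)
    (hnext : ∀ i, ∀ x ∈ A i, ∀ j, j ≠ i + 1 → κ x (A j) = 0)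
    {m : Measure E} {r : ℝ≥0∞} (hm : m.bind κ = r • m) (hr0 : r ≠ 0) (hrtop : r ≠ ⊤) :
    m = ∑ i : Fin t, (r ^ (i : ℕ))⁻¹ • (m.restrict (A 0)).bind (iterK κ i) := by
  conv_lhs => rw [Measure.eq_sum_restrict_of_partition m hAmeas hAdisj hAcover]
  exact Finset.sum_congr rfl fun i _ =>
    restrict_eq_inv_pow_smul_bind_iterK κ hAmeas hAcover hnext hm hr0 hrtop i

end Periodic

theorem stmt3_general
    {E : Type*} [MeasurableSpace E] (κ : Kernel E E) {t : ℕ} [NeZero t]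
    (A : Fin t → Set E)
    (hAmeas : ∀ i, MeasurableSet (A i))
    (hAdisj : ∀ i j, i ≠ j → Disjoint (A i) (A j))
    (hAcover : (⋃ i, A i) = Set.univ)
    (hper : ∀ i : Fin t, ∀ x ∈ A i,
      (∀ j : Fin t, j ≠ i + 1 → κ x (A j) = 0) ∧ κ x (A (i + 1)) = κ x Set.univ)
    (ν : Measure E) [IsProbabilityMeasure ν]
    {θ : ℝ} (hθ : 0 < θ)
    (hQSD : Measure.bind ν (fun x => iterK κ t x) = ENNReal.ofReal θ • ν)
    (μ : Measure E) [IsProbabilityMeasure μ]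
    {ρ : ℝ} (hρ : 0 < ρ)
    (hμQSD : Measure.bind μ (fun x => κ x) = ENNReal.ofReal ρ • μ)
    (hμν : (μ (A 0))⁻¹ • μ.restrict (A 0) = ν) :
    μ = (((∑ i : Fin t, ENNReal.ofReal (θ ^ (-((i : ℕ) : ℝ) / (t : ℝ))) •
          Measure.bind ν (fun x => iterK κ (i : ℕ) x)) Set.univ))⁻¹ •
        (∑ i : Fin t, ENNReal.ofReal (θ ^ (-((i : ℕ) : ℝ) / (t : ℝ))) •
          Measure.bind ν (fun x => iterK κ (i : ℕ) x)) := by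
  have hnext : ∀ i, ∀ x ∈ A i, ∀ j, j ≠ i + 1 → κ x (A j) = 0 := fun i x hx => (hper i x hx).1
  have hr0 : ENNReal.ofReal ρ ≠ 0 := (ENNReal.ofReal_pos.mpr hρ).ne'
  have hres := Measure.restrict_eq_measure_smul_of_inv_smul_restrict_eq hμν
  have hrate : ENNReal.ofReal ρ ^ t = ENNReal.ofReal θ :=
    pow_period_eq_of_bind_iterK_period κ hAmeas hAcover hnext hμQSD
      (Measure.measure_ne_zero_of_inv_smul_restrict_eq hμν)
      (by rw [hres, Measure.bind_smul, hQSD, smul_comm])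
  have hθρ : θ = ρ ^ t := by
    rwa [← ENNReal.ofReal_eq_ofReal_iff hθ.le (by positivity), ENNReal.ofReal_pow hρ.le, eq_comm]
  have hcoef (i : Fin t) : ENNReal.ofReal (θ ^ (-((i : ℕ) : ℝ) / (t : ℝ))) =
      (ENNReal.ofReal ρ ^ (i : ℕ))⁻¹ := by
    rw [hθρ, ENNReal.ofReal_pow_rpow_neg_div hρ (NeZero.ne t)]
  refine Measure.eq_inv_measure_univ_smul_of_eq_smul (c := μ (A 0)) ?_
  conv_lhs => rw [eq_sum_inv_pow_smul_bind_iterK κ hAmeas hAdisj hAcover hnext hμQSD hr0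
    ENNReal.ofReal_ne_top]
  simp only [hcoef, hres, Measure.bind_smul, Finset.smul_sum, smul_comm (μ (A 0))]

theorem stmt3
    {E : Type*} [MeasurableSpace E] (κ : Kernel E E) {t : ℕ} [NeZero t]
    (A : Fin t → Set E)
    (hAmeas : ∀ i, MeasurableSet (A i))
    (hAdisj : ∀ i j, i ≠ j → Disjoint (A i) (A j))
    (hAcover : (⋃ i, A i) = Set.univ)
    (hsub : ∀ x, κ x Set.univ ≤ 1)
    (hper : ∀ i : Fin t, ∀ x ∈ A i,
      (∀ j : Fin t, j ≠ i + 1 → κ x (A j) = 0) ∧ κ x (A (i + 1)) = κ x Set.univ)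
    (ν : Measure E) [IsProbabilityMeasure ν] (hν0 : ν (A 0) = 1)
    {θ : ℝ} (hθ : 0 < θ) (hθ1 : θ ≤ 1)
    (hQSD : Measure.bind ν (fun x => iterK κ t x) = ENNReal.ofReal θ • ν)
    (μ : Measure E) [IsProbabilityMeasure μ]
    {ρ : ℝ} (hρ : 0 < ρ)
    (hμQSD : Measure.bind μ (fun x => κ x) = ENNReal.ofReal ρ • μ)
    (hμν : (μ (A 0))⁻¹ • μ.restrict (A 0) = ν) :
    μ = (((∑ i : Fin t, ENNReal.ofReal (θ ^ (-((i : ℕ) : ℝ) / (t : ℝ))) •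
          Measure.bind ν (fun x => iterK κ (i : ℕ) x)) Set.univ))⁻¹ •
        (∑ i : Fin t, ENNReal.ofReal (θ ^ (-((i : ℕ) : ℝ) / (t : ℝ))) •
          Measure.bind ν (fun x => iterK κ (i : ℕ) x)) :=
  stmt3_general κ A hAmeas hAdisj hAcover hper ν hθ hQSD μ hρ hμQSD hμν
end

section
/- (Index-shift identity for the quasi-ergodic limit.) For any bounded measurable f : E → ℝ and any i ∈ {0,...,t-1}: Σ_{j=0}^{t-1} θ_0^{-(i+j)} ν P_{i+j}(f η_{2t-i-j}) = θ_0^{-t} Σ_{k=0}^{t-1} ν P_k(f P_{t-k} η); in particular the left-hand side does not depend on i. -/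
/-!
Write `⟨m, n⟩ := ν P_n (f · P_m η)` (`iterKPairing`). By periodicity `P_t` maps the complement of `A 0` into itself,
so `P_t η = θ₀^t η` holds everywhere, not only on `A 0`. Together with `ν P_t = θ₀^t ν`, moving one
period of `t` steps into or out of either index costs a factor `θ₀^t`, whence
`⟨2t - n, n⟩ = θ₀^t ⟨t - n % t, n % t⟩` for `n < 2t`. The `j`-th term on the left is
`θ₀^{-2t} ⟨2t - (i + j), i + j⟩`, and `j ↦ i + j` permutes `Fin t`.
-/

open MeasureTheory ProbabilityTheory

open scoped ENNReal

namespace MeasureTheory.Measure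

variable {α β : Type*} [MeasurableSpace α] [MeasurableSpace β]

theorem integral_comp {κ : Kernel α β} {μ : Measure α} {f : β → ℝ}
    (hf : Integrable f (κ ∘ₘ μ)) : ∫ y, f y ∂(κ ∘ₘ μ) = ∫ x, ∫ y, f y ∂κ x ∂μ := by
  rw [comp_eq_comp_const_apply] at hf ⊢
  rw [Kernel.integral_comp hf]
  simp only [Kernel.const_apply]

theorem integrable_mul_integral_of_integrable_comp {κ : Kernel α β} {μ : Measure α}
    {f : α → ℝ} {g : β → ℝ} {M : ℝ} (hf : AEStronglyMeasurable f μ) (hfM : ∀ x, |f x| ≤ M)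
    (hg0 : ∀ y, 0 ≤ g y) (hg : Integrable g (κ ∘ₘ μ)) :
    Integrable (fun x ↦ f x * ∫ y, g y ∂κ x) μ := by
  have hint : Integrable (fun x ↦ ∫ y, g y ∂κ x) μ := by
    simpa only [Real.norm_of_nonneg (hg0 _)] using integrable_integral_norm_of_integrable_comp hg
  exact hint.bdd_mul hf (Filter.Eventually.of_forall hfM)

end MeasureTheory.Measure

section IterK

variable {E : Type*} [MeasurableSpace E] (κ : Kernel E E)

theorem iterK_add (a b : ℕ) : iterK κ (a + b) = iterK κ a ∘ₖ iterK κ b := by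
  induction a with
  | zero => simp [iterK]
  | succ a ih => rw [Nat.add_right_comm, iterK, iterK, ih, Kernel.comp_assoc]

theorem iterK_add_comp (μ : Measure E) (a b : ℕ) :
    iterK κ (a + b) ∘ₘ μ = iterK κ a ∘ₘ (iterK κ b ∘ₘ μ) := by
  rw [iterK_add, Measure.comp_assoc]

variable {κ} {t : ℕ} {μ : Measure E} {c : ℝ≥0∞}

theorem iterK_add_period_comp (hμ : iterK κ t ∘ₘ μ = c • μ) (k : ℕ) :
    iterK κ (k + t) ∘ₘ μ = c • (iterK κ k ∘ₘ μ) := by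
  rw [iterK_add_comp, hμ, Measure.comp_smul]

theorem integral_integral_iterK_add_period {θ : ℝ} (hθ : 0 ≤ θ)
    (hμ : iterK κ t ∘ₘ μ = ENNReal.ofReal θ • μ) {k : ℕ} {h : E → ℝ}
    (hh : Integrable h (iterK κ k ∘ₘ μ)) :
    ∫ x, ∫ y, h y ∂iterK κ (k + t) x ∂μ = θ * ∫ x, ∫ y, h y ∂iterK κ k x ∂μ := by
  have hh' : Integrable h (iterK κ (k + t) ∘ₘ μ) := by
    rw [iterK_add_period_comp hμ]
    exact hh.smul_measure ENNReal.ofReal_ne_top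
  rw [← Measure.integral_comp hh, ← Measure.integral_comp hh', iterK_add_period_comp hμ,
    integral_smul_measure, ENNReal.toReal_ofReal hθ, smul_eq_mul]

end IterK

section Periodic

variable {E G : Type*} [MeasurableSpace E] [AddMonoidWithOne G] {κ : Kernel E E} {A : G → Set E}

theorem ae_mem_iterK (hA : ∀ i, MeasurableSet (A i))
    (hstep : ∀ i, ∀ x ∈ A i, ∀ᵐ y ∂κ x, y ∈ A (i + 1)) (m : ℕ) {r : G} {z : E} (hz : z ∈ A r) :
    ∀ᵐ y ∂iterK κ m z, y ∈ A (r + m) := by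
  induction m with
  | zero =>
    rw [iterK, Kernel.id_apply, Nat.cast_zero, add_zero]
    exact (ae_dirac_iff (hA r)).2 hz
  | succ m ih =>
    refine Kernel.ae_comp_of_ae_ae (hA _) ?_
    filter_upwards [ih] with y hy
    simpa [Nat.cast_succ, add_assoc] using hstep _ y hy

end Periodic

section Partition

variable {E : Type*} [MeasurableSpace E]

theorem ae_mem_of_measure_eq_zero_of_ne {ι : Type*} [Countable ι] {μ : Measure E}
    {A : ι → Set E} (hcover : ⋃ i, A i = Set.univ) {i : ι} (h : ∀ j, j ≠ i → μ (A j) = 0) :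
    ∀ᵐ y ∂μ, y ∈ A i := by
  have hout : ∀ᵐ y ∂μ, ∀ j, j ≠ i → y ∉ A j :=
    ae_all_iff.2 fun j ↦ by
      by_cases hj : j = i
      · exact Filter.Eventually.of_forall fun _ h ↦ absurd hj h
      · filter_upwards [measure_eq_zero_iff_ae_notMem.1 (h j hj)] with y hy using fun _ ↦ hy
  filter_upwards [hout] with y hy
  obtain ⟨j, hj⟩ := Set.mem_iUnion.1 (hcover ▸ Set.mem_univ y)
  by_contra hyi
  exact hy j (fun hji ↦ hyi (hji ▸ hj)) hj

open Fin.NatCast in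
theorem ae_notMem_iterK_period {κ : Kernel E E} {t : ℕ} [NeZero t] {A : Fin t → Set E}
    (hA : ∀ i, MeasurableSet (A i)) (hdisj : ∀ i j, i ≠ j → Disjoint (A i) (A j))
    (hcover : ⋃ i, A i = Set.univ) (hstep : ∀ i, ∀ x ∈ A i, ∀ᵐ y ∂κ x, y ∈ A (i + 1))
    {z : E} (hz : z ∉ A 0) : ∀ᵐ y ∂iterK κ t z, y ∉ A 0 := by
  obtain ⟨r, hr⟩ := Set.mem_iUnion.1 (hcover ▸ Set.mem_univ z)
  have hr0 : r ≠ 0 := by rintro rfl; exact hz hr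
  filter_upwards [ae_mem_iterK hA hstep t hr] with y hy
  rw [Fin.natCast_self, add_zero] at hy
  exact Set.disjoint_left.1 (hdisj r 0 hr0) hy

theorem integral_eq_mul_of_forall_mem {K : Kernel E E} {B : Set E} {η : E → ℝ} {c : ℝ}
    (hη : ∀ x ∉ B, η x = 0) (hK : ∀ x ∉ B, ∀ᵐ y ∂K x, y ∉ B)
    (hB : ∀ x ∈ B, ∫ y, η y ∂K x = c * η x) (x : E) : ∫ y, η y ∂K x = c * η x := by
  by_cases hx : x ∈ B
  · exact hB x hx
  · rw [hη x hx, mul_zero]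
    exact integral_eq_zero_of_ae (by filter_upwards [hK x hx] with y hy using hη y hy)

end Partition

section QuasiErgodic

variable {E : Type*} [MeasurableSpace E] {κ : Kernel E E} {t : ℕ} {ν : Measure E}
  {η : E → ℝ} {c : ℝ}

variable (κ ν) in
noncomputable def iterKPairing (η f : E → ℝ) (m n : ℕ) : ℝ :=
  ∫ x, ∫ y, f y * ∫ z, η z ∂iterK κ m y ∂iterK κ n x ∂ν

theorem integral_iterK_period_add (hηeig : ∀ x, ∫ y, η y ∂iterK κ t x = c * η x) {m : ℕ}
    {y : E} (hint : Integrable η (iterK κ (t + m) y)) :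
    ∫ z, η z ∂iterK κ (t + m) y = c * ∫ z, η z ∂iterK κ m y := by
  rw [iterK_add] at hint ⊢
  simp_rw [Kernel.integral_comp hint, hηeig, integral_const_mul]

theorem iterKPairing_period_add_left (hν : iterK κ t ∘ₘ ν = ENNReal.ofReal c • ν)
    (hηint : Integrable η ν) (hηeig : ∀ x, ∫ y, η y ∂iterK κ t x = c * η x) (f : E → ℝ)
    {m n : ℕ} (hmn : m + n = t) :
    iterKPairing κ ν η f (t + m) n = c * iterKPairing κ ν η f m n := by
  have hint : Integrable η (iterK κ (t + m) ∘ₘ (iterK κ n ∘ₘ ν)) := by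
    rw [← iterK_add_comp, Nat.add_assoc, hmn, iterK_add_period_comp hν, hν]
    exact (hηint.smul_measure ENNReal.ofReal_ne_top).smul_measure ENNReal.ofReal_ne_top
  have hae := Measure.ae_ae_of_ae_comp (Measure.ae_integrable_of_integrable_comp hint)
  rw [iterKPairing, iterKPairing, ← integral_const_mul]
  refine integral_congr_ae ?_
  filter_upwards [hae] with x hx
  rw [← integral_const_mul]
  refine integral_congr_ae ?_
  filter_upwards [hx] with y hy
  rw [integral_iterK_period_add hηeig hy, mul_left_comm]

theorem integrable_mul_integral_iterK (hν : iterK κ t ∘ₘ ν = ENNReal.ofReal c • ν)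
    (hηint : Integrable η ν) (hη0 : ∀ x, 0 ≤ η x) {f : E → ℝ} {M : ℝ} (hf : Measurable f)
    (hfM : ∀ x, |f x| ≤ M) {m n : ℕ} (hmn : m + n = t) :
    Integrable (fun y ↦ f y * ∫ z, η z ∂iterK κ m y) (iterK κ n ∘ₘ ν) := by
  refine Measure.integrable_mul_integral_of_integrable_comp hf.aestronglyMeasurable hfM hη0 ?_
  rw [← iterK_add_comp, hmn, hν]
  exact hηint.smul_measure ENNReal.ofReal_ne_top

theorem iterKPairing_add_period_right (hc : 0 ≤ c)
    (hν : iterK κ t ∘ₘ ν = ENNReal.ofReal c • ν) (hηint : Integrable η ν) (hη0 : ∀ x, 0 ≤ η x)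
    {f : E → ℝ} {M : ℝ} (hf : Measurable f) (hfM : ∀ x, |f x| ≤ M) {m n : ℕ} (hmn : m + n = t) :
    iterKPairing κ ν η f m (n + t) = c * iterKPairing κ ν η f m n :=
  integral_integral_iterK_add_period hc hν (integrable_mul_integral_iterK hν hηint hη0 hf hfM hmn)

theorem iterKPairing_two_mul_sub (hc : 0 ≤ c)
    (hν : iterK κ t ∘ₘ ν = ENNReal.ofReal c • ν) (hηint : Integrable η ν) (hη0 : ∀ x, 0 ≤ η x)
    (hηeig : ∀ x, ∫ y, η y ∂iterK κ t x = c * η x) {f : E → ℝ} {M : ℝ} (hf : Measurable f)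
    (hfM : ∀ x, |f x| ≤ M) {n : ℕ} (hn : n < 2 * t) :
    iterKPairing κ ν η f (2 * t - n) n = c * iterKPairing κ ν η f (t - n % t) (n % t) := by
  rcases lt_or_ge n t with hnt | htn
  · rw [Nat.mod_eq_of_lt hnt, show 2 * t - n = t + (t - n) by omega]
    exact iterKPairing_period_add_left hν hηint hηeig f (by omega)
  · obtain ⟨k, rfl⟩ := Nat.exists_eq_add_of_le' htn
    rw [Nat.add_mod_right, Nat.mod_eq_of_lt (by omega), show 2 * t - (k + t) = t - k by omega]
    exact iterKPairing_add_period_right hc hν hηint hη0 hf hfM (by omega)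

end QuasiErgodic

theorem stmt16_general
    {E : Type*} [MeasurableSpace E] (κ : Kernel E E) {t : ℕ} [NeZero t]
    (A : Fin t → Set E)
    (hAmeas : ∀ i, MeasurableSet (A i))
    (hAdisj : ∀ i j, i ≠ j → Disjoint (A i) (A j))
    (hAcover : (⋃ i, A i) = Set.univ)
    (hper : ∀ i : Fin t, ∀ x ∈ A i,
      (∀ j : Fin t, j ≠ i + 1 → κ x (A j) = 0) ∧ κ x (A (i + 1)) = κ x Set.univ)
    (η : E → ℝ) (hη0 : ∀ x, 0 ≤ η x)
    (hηsupp : ∀ x ∉ A (0 : Fin t), η x = 0)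
    {θ0 : ℝ} (hθ0 : 0 < θ0)
    (hηeig : ∀ x ∈ A (0 : Fin t), ∫ y, η y ∂(iterK κ t x) = θ0 ^ t * η x)
    (ν : Measure E)
    (hνeig : Measure.bind ν (fun x => iterK κ t x) = ENNReal.ofReal (θ0 ^ t) • ν)
    (hνη : ∫ x, η x ∂ν = 1)
    (ηf : ℕ → E → ℝ)
    (hηf : ∀ k : ℕ, ∀ x : E, ηf k x = (θ0 ^ k)⁻¹ * ∫ y, η y ∂(iterK κ k x)) :
    ∀ f : E → ℝ, Measurable f → (∃ M : ℝ, ∀ x, |f x| ≤ M) →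
      ∀ i : Fin t,
        ∑ j : Fin t, (θ0 ^ ((i : ℕ) + (j : ℕ)))⁻¹ *
            ∫ x, (∫ y, f y * ηf (2 * t - (i : ℕ) - (j : ℕ)) y
              ∂(iterK κ ((i : ℕ) + (j : ℕ)) x)) ∂ν
          = (θ0 ^ t)⁻¹ * ∑ k : Fin t,
              ∫ x, (∫ y, f y * (∫ z, η z ∂(iterK κ (t - (k : ℕ)) y))
                ∂(iterK κ (k : ℕ) x)) ∂ν := by
  rintro f hf ⟨M, hfM⟩ i
  have hstep (i : Fin t) (x : E) (hx : x ∈ A i) : ∀ᵐ y ∂κ x, y ∈ A (i + 1) :=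
    ae_mem_of_measure_eq_zero_of_ne hAcover (hper i x hx).1
  have hηeig' := integral_eq_mul_of_forall_mem hηsupp
    (fun _ hx ↦ ae_notMem_iterK_period hAmeas hAdisj hAcover hstep hx) hηeig
  have hterm (j : Fin t) : (θ0 ^ ((i : ℕ) + (j : ℕ)))⁻¹ *
      ∫ x, (∫ y, f y * ηf (2 * t - (i : ℕ) - (j : ℕ)) y ∂(iterK κ ((i : ℕ) + (j : ℕ)) x)) ∂ν
        = (θ0 ^ t)⁻¹ * iterKPairing κ ν η f (t - (i + j : Fin t)) (i + j : Fin t) := by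
    have hn : (i : ℕ) + j < 2 * t := by omega
    simp_rw [hηf, mul_left_comm (f _), integral_const_mul, Nat.sub_sub, Fin.val_add]
    rw [← iterKPairing, iterKPairing_two_mul_sub (pow_nonneg hθ0.le t) hνeig
      (integrable_of_integral_eq_one hνη) hη0 hηeig' hf hfM hn]
    field_simp
    rw [← pow_add, Nat.add_sub_cancel' hn.le]
    ring
  rw [Finset.sum_congr rfl fun j _ ↦ hterm j, ← Finset.mul_sum]
  exact congrArg _ (Fintype.sum_equiv (Equiv.addLeft i) _ _ fun _ ↦ rfl)

theorem stmt16
    {E : Type*} [MeasurableSpace E] (κ : Kernel E E) {t : ℕ} [NeZero t]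
    (A : Fin t → Set E)
    (hAmeas : ∀ i, MeasurableSet (A i))
    (hAdisj : ∀ i j, i ≠ j → Disjoint (A i) (A j))
    (hAcover : (⋃ i, A i) = Set.univ)
    (hsub : ∀ x, κ x Set.univ ≤ 1)
    (hper : ∀ i : Fin t, ∀ x ∈ A i,
      (∀ j : Fin t, j ≠ i + 1 → κ x (A j) = 0) ∧ κ x (A (i + 1)) = κ x Set.univ)
    (η : E → ℝ) (hηmeas : Measurable η) (hη0 : ∀ x, 0 ≤ η x)
    (hηsupp : ∀ x ∉ A (0 : Fin t), η x = 0)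
    {θ0 : ℝ} (hθ0 : 0 < θ0) (hθ01 : θ0 ≤ 1)
    (hηeig : ∀ x ∈ A (0 : Fin t), ∫ y, η y ∂(iterK κ t x) = θ0 ^ t * η x)
    (ν : Measure E) [IsProbabilityMeasure ν] (hν0 : ν (A (0 : Fin t)) = 1)
    (hνeig : Measure.bind ν (fun x => iterK κ t x) = ENNReal.ofReal (θ0 ^ t) • ν)
    (hνη : ∫ x, η x ∂ν = 1)
    (ηf : ℕ → E → ℝ)
    (hηf : ∀ k : ℕ, ∀ x : E, ηf k x = (θ0 ^ k)⁻¹ * ∫ y, η y ∂(iterK κ k x)) :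
    ∀ f : E → ℝ, Measurable f → (∃ M : ℝ, ∀ x, |f x| ≤ M) →
      ∀ i : Fin t,
        ∑ j : Fin t, (θ0 ^ ((i : ℕ) + (j : ℕ)))⁻¹ *
            ∫ x, (∫ y, f y * ηf (2 * t - (i : ℕ) - (j : ℕ)) y
              ∂(iterK κ ((i : ℕ) + (j : ℕ)) x)) ∂ν
          = (θ0 ^ t)⁻¹ * ∑ k : Fin t,
              ∫ x, (∫ y, f y * (∫ z, η z ∂(iterK κ (t - (k : ℕ)) y))
                ∂(iterK κ (k : ℕ) x)) ∂ν :=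
  stmt16_general κ A hAmeas hAdisj hAcover hper η hη0 hηsupp hθ0 hηeig ν hνeig hνη ηf hηf
end
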